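/- arXiv:1609.03303 — 3 statements merged into one kernel-verified Lean document; each statement's English description precedes it below -/
import Mathlib

section
/- For all f, g ∈ 𝒮(R^d), the symplectic Fourier transform of the Wigner distribution of f and g equals the Wigner distribution of the reflection of f and g: F_σ(W_{f,g}) = W_{f̌,g}, where f̌(x) = f(−x). -/
open MeasureTheory Complex
open scoped Real BigOperators Nat ENNReal

noncomputable section

/-- `ℝ^d` as functions `Fin d → ℝ`. -/
abbrev RR (d : ℕ) := Fin d → ℝ

/-- `ℝ^{2d} = ℝ^d × ℝ^d`. -/
abbrev RR2 (d : ℕ) := (Fin d → ℝ) × (Fin d → ℝ)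

/-- The symplectic form `σ(X,Y) = ⟨y,ξ⟩ − ⟨x,η⟩` for `X=(x,ξ)`, `Y=(y,η)`. -/
def sform (d : ℕ) (X Y : RR2 d) : ℝ :=
  (∑ j, Y.1 j * X.2 j) - (∑ j, X.1 j * Y.2 j)

/-- Partial derivative `∂_{x_j}` on functions of `(x,ξ) ∈ ℝ^{2d}`. -/
def pd1 (d : ℕ) (j : Fin d) (f : RR2 d → ℂ) : RR2 d → ℂ :=
  fun p => fderiv ℝ f p (Pi.single j 1, 0)

/-- Partial derivative `∂_{ξ_j}` on functions of `(x,ξ) ∈ ℝ^{2d}`. -/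
def pd2 (d : ℕ) (j : Fin d) (f : RR2 d → ℂ) : RR2 d → ℂ :=
  fun p => fderiv ℝ f p (0, Pi.single j 1)

/-- `H_σ a = (|X|² − (1/4)Δ_X) a + ⟨ξ, D_x a⟩ − ⟨x, D_ξ a⟩`, where `D = −i∇`. -/
def Hsig (d : ℕ) (f : RR2 d → ℂ) : RR2 d → ℂ := fun p =>
  ((∑ j, ((p.1 j) ^ 2 + (p.2 j) ^ 2) : ℝ) : ℂ) * f p
    - (1/4 : ℂ) * ∑ j, (pd1 d j (pd1 d j f) p + pd2 d j (pd2 d j f) p)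
    + ∑ j, ((p.2 j : ℂ) * (-Complex.I * pd1 d j f p))
    - ∑ j, ((p.1 j : ℂ) * (-Complex.I * pd2 d j f p))

/-- `H̄_σ a = (|X|² − (1/4)Δ_X) a − ⟨ξ, D_x a⟩ + ⟨x, D_ξ a⟩`, where `D = −i∇`. -/
def Hbar (d : ℕ) (f : RR2 d → ℂ) : RR2 d → ℂ := fun p =>
  ((∑ j, ((p.1 j) ^ 2 + (p.2 j) ^ 2) : ℝ) : ℂ) * f p
    - (1/4 : ℂ) * ∑ j, (pd1 d j (pd1 d j f) p + pd2 d j (pd2 d j f) p)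
    - ∑ j, ((p.2 j : ℂ) * (-Complex.I * pd1 d j f p))
    + ∑ j, ((p.1 j : ℂ) * (-Complex.I * pd2 d j f p))

/-- `T_σ = H_σ ∘ H̄_σ`. -/
def Tsig (d : ℕ) (f : RR2 d → ℂ) : RR2 d → ℂ := Hsig d (Hbar d f)

/-- Partial derivative `∂_{x_j}` for real-valued functions on `ℝ^n`. -/
def pdR (n : ℕ) (j : Fin n) (f : (Fin n → ℝ) → ℝ) : (Fin n → ℝ) → ℝ :=
  fun x => fderiv ℝ f x (Pi.single j 1)

/-- Iterated partial derivative `∂^α` on `ℝ^n`. -/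
def multiDeriv (n : ℕ) (α : Fin n → ℕ) (f : (Fin n → ℝ) → ℝ) : (Fin n → ℝ) → ℝ :=
  (List.finRange n).foldr (fun j g => (pdR n j)^[α j] g) f

/-- The Hermite function
`h_α(x) = π^{−n/4} (−1)^{|α|} (2^{|α|} α!)^{−1/2} e^{|x|²/2} ∂^α(e^{−|x|²})`. -/
def hermiteFun (n : ℕ) (α : Fin n → ℕ) (x : Fin n → ℝ) : ℝ :=
  Real.pi ^ (-(n : ℝ)/4) * (-1 : ℝ) ^ (∑ j, α j)
    * (((2 : ℝ) ^ (∑ j, α j) * ((∏ j, (α j).factorial : ℕ) : ℝ)) ^ (-(1:ℝ)/2))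
    * Real.exp ((∑ j, (x j) ^ 2) / 2)
    * multiDeriv n α (fun y => Real.exp (-(∑ j, (y j) ^ 2))) x

/-- The Wigner distribution
`W_{f,g}(x,ξ) = (2π)^{−d/2} ∫ f(x−y/2) conj(g(x+y/2)) e^{i⟨y,ξ⟩} dy`. -/
def wigner (d : ℕ) (f g : RR d → ℂ) (p : RR2 d) : ℂ :=
  (((2 * Real.pi) ^ (-(d : ℝ)/2) : ℝ) : ℂ) *
    ∫ y : RR d,
      f (p.1 - (2:ℝ)⁻¹ • y) * (starRingEnd ℂ) (g (p.1 + (2:ℝ)⁻¹ • y))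
        * Complex.exp (Complex.I * ((∑ j, y j * p.2 j : ℝ) : ℂ))

/-- The Hermite–Wong function `ϱ_α = (−1)^{|α₁|} W_{h_{α₁},h_{α₂}}`. -/
def hermiteWong (d : ℕ) (α : (Fin d → ℕ) × (Fin d → ℕ)) (X : RR2 d) : ℂ :=
  (-1 : ℂ) ^ (∑ j, α.1 j) *
    wigner d (fun x => (hermiteFun d α.1 x : ℂ)) (fun x => (hermiteFun d α.2 x : ℂ)) X

/-- The symplectic Fourier transform `(F_σ a)(X) = π^{−d} ∫ a(Y) e^{2iσ(X,Y)} dY`. -/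
def symplFT (d : ℕ) (a : RR2 d → ℂ) (X : RR2 d) : ℂ :=
  (((Real.pi ^ d : ℝ)⁻¹ : ℝ) : ℂ) *
    ∫ Y : RR2 d, a Y * Complex.exp (2 * Complex.I * ((sform d X Y : ℝ) : ℂ))

/-- The twisted convolution
`(a *_σ b)(X) = (2/π)^{d/2} ∫ a(X−Y) b(Y) e^{2iσ(X,Y)} dY`. -/
def twConv (d : ℕ) (a b : RR2 d → ℂ) (X : RR2 d) : ℂ :=
  ((((2 / Real.pi) ^ ((d : ℝ)/2) : ℝ)) : ℂ) *
    ∫ Y : RR2 d, a (X - Y) * b Y * Complex.exp (2 * Complex.I * ((sform d X Y : ℝ) : ℂ))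

/-- A tempered distribution `a` on `ℝ^{2d}` is positive semi-definite with respect to the
twisted convolution if `∫ (a *_σ ψ)(X) conj(ψ(X)) dX` is real and nonnegative for every
Schwartz `ψ`, where `(a *_σ ψ)(X) = a(Z ↦ (2/π)^{d/2} ψ(X−Z) e^{−2iσ(X,Z)})`.
The Schwartz function `Z ↦ (2/π)^{d/2} ψ(X−Z) e^{−2iσ(X,Z)}` is represented by an arbitrary
witness family `Φ`. -/
def PosSemidefTwisted (d : ℕ) (a : SchwartzMap (RR2 d) ℂ →L[ℂ] ℂ) : Prop :=
  ∀ (ψ : SchwartzMap (RR2 d) ℂ) (Φ : RR2 d → SchwartzMap (RR2 d) ℂ),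
    (∀ X Z, Φ X Z = (((2 / Real.pi) ^ ((d : ℝ)/2) : ℝ) : ℂ) * ψ (X - Z)
        * Complex.exp (-2 * Complex.I * ((sform d X Z : ℝ) : ℂ))) →
    (∫ X : RR2 d, a (Φ X) * (starRingEnd ℂ) (ψ X)).im = 0 ∧
      0 ≤ (∫ X : RR2 d, a (Φ X) * (starRingEnd ℂ) (ψ X)).re

/-- The operator `A`: `(Aa)(x,y) = (2π)^{−d/2} ∫ a((y−x)/2, ξ) e^{−i⟨x+y,ξ⟩} dξ`. -/
def opA (d : ℕ) (a : RR2 d → ℂ) (p : RR2 d) : ℂ :=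
  (((2 * Real.pi) ^ (-(d : ℝ)/2) : ℝ) : ℂ) *
    ∫ ξ : RR d, a ((2:ℝ)⁻¹ • (p.2 - p.1), ξ)
      * Complex.exp (-Complex.I * ((∑ j, (p.1 j + p.2 j) * ξ j : ℝ) : ℂ))

/-- The partial harmonic oscillator `H₁U(x,y) = (|x|² − Δ_x)U(x,y)`. -/
def H1op (d : ℕ) (f : RR2 d → ℂ) : RR2 d → ℂ := fun p =>
  ((∑ j, (p.1 j) ^ 2 : ℝ) : ℂ) * f p - ∑ j, pd1 d j (pd1 d j f) p

/-- The partial harmonic oscillator `H₂U(x,y) = (|y|² − Δ_y)U(x,y)`. -/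
def H2op (d : ℕ) (f : RR2 d → ℂ) : RR2 d → ℂ := fun p =>
  ((∑ j, (p.2 j) ^ 2 : ℝ) : ℂ) * f p - ∑ j, pd2 d j (pd2 d j f) p

/-- Partial derivative `∂_{x_j}` for complex-valued functions on `ℝ^d`. -/
def pdC (d : ℕ) (j : Fin d) (f : RR d → ℂ) : RR d → ℂ :=
  fun x => fderiv ℝ f x (Pi.single j 1)

/-- The harmonic oscillator `H = |x|² − Δ` on `ℝ^d`. -/
def Hop (d : ℕ) (f : RR d → ℂ) : RR d → ℂ := fun x =>
  ((∑ j, (x j) ^ 2 : ℝ) : ℂ) * f x - ∑ j, pdC d j (pdC d j f) x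

/-- The Weyl quantization
`Op^w(a)f(x) = (2π)^{−d} ∬ a((x+y)/2, ξ) f(y) e^{i⟨x−y,ξ⟩} dy dξ`. -/
def weylOp (d : ℕ) (a : RR2 d → ℂ) (f : RR d → ℂ) (x : RR d) : ℂ :=
  ((((2 * Real.pi) ^ d : ℝ)⁻¹ : ℝ) : ℂ) *
    ∫ Y : RR2 d, a ((2:ℝ)⁻¹ • (x + Y.1), Y.2) * f Y.1
      * Complex.exp (Complex.I * ((∑ j, (x j - Y.1 j) * Y.2 j : ℝ) : ℂ))

/-- `Z_{1,j} = (1/2)∂_{z_j} + z̄_j`, where `∂_{z_j} = ∂_{x_j} − i∂_{ξ_j}`, `z̄_j = x_j − iξ_j`. -/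
def Zop1 (d : ℕ) (j : Fin d) (f : RR2 d → ℂ) : RR2 d → ℂ := fun p =>
  (1/2 : ℂ) * (pd1 d j f p - Complex.I * pd2 d j f p)
    + ((p.1 j : ℂ) - Complex.I * (p.2 j : ℂ)) * f p

/-- `Z̃_{1,j} = (1/2)∂_{z̄_j} − z_j`, where `∂_{z̄_j} = ∂_{x_j} + i∂_{ξ_j}`, `z_j = x_j + iξ_j`. -/
def Ztop1 (d : ℕ) (j : Fin d) (f : RR2 d → ℂ) : RR2 d → ℂ := fun p =>
  (1/2 : ℂ) * (pd1 d j f p + Complex.I * pd2 d j f p)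
    - ((p.1 j : ℂ) + Complex.I * (p.2 j : ℂ)) * f p

/-- `Z_{2,j} = (1/2)∂_{z̄_j} + z_j`. -/
def Zop2 (d : ℕ) (j : Fin d) (f : RR2 d → ℂ) : RR2 d → ℂ := fun p =>
  (1/2 : ℂ) * (pd1 d j f p + Complex.I * pd2 d j f p)
    + ((p.1 j : ℂ) + Complex.I * (p.2 j : ℂ)) * f p

/-- `Z̃_{2,j} = (1/2)∂_{z_j} − z̄_j`. -/
def Ztop2 (d : ℕ) (j : Fin d) (f : RR2 d → ℂ) : RR2 d → ℂ := fun p =>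
  (1/2 : ℂ) * (pd1 d j f p - Complex.I * pd2 d j f p)
    - ((p.1 j : ℂ) - Complex.I * (p.2 j : ℂ)) * f p

/-- Partial derivative `∂_{x_j}` for real-valued functions on `ℝ^{2d}`. -/
def pd1R (d : ℕ) (j : Fin d) (f : RR2 d → ℝ) : RR2 d → ℝ :=
  fun p => fderiv ℝ f p (Pi.single j 1, 0)

/-- Partial derivative `∂_{y_j}` for real-valued functions on `ℝ^{2d}`. -/
def pd2R (d : ℕ) (j : Fin d) (f : RR2 d → ℝ) : RR2 d → ℝ :=
  fun p => fderiv ℝ f p (0, Pi.single j 1)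

/-- Iterated partial derivative `∂^α`, `α ∈ ℕ^{2d}`, on `ℝ^{2d}`. -/
def multiDeriv2 (d : ℕ) (α : (Fin d → ℕ) × (Fin d → ℕ)) (f : RR2 d → ℝ) : RR2 d → ℝ :=
  (List.finRange d).foldr (fun j g => (pd1R d j)^[α.1 j] g)
    ((List.finRange d).foldr (fun j g => (pd2R d j)^[α.2 j] g) f)

/-- The Hermite function on `ℝ^{2d}` of order `α ∈ ℕ^{2d}` (with `n = 2d` in the general
formula `h_α = π^{−n/4} (−1)^{|α|} (2^{|α|} α!)^{−1/2} e^{|X|²/2} ∂^α(e^{−|X|²})`). -/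
def hermite2 (d : ℕ) (α : (Fin d → ℕ) × (Fin d → ℕ)) (X : RR2 d) : ℝ :=
  Real.pi ^ (-(2 * d : ℝ)/4) * (-1 : ℝ) ^ ((∑ j, α.1 j) + ∑ j, α.2 j)
    * (((2 : ℝ) ^ ((∑ j, α.1 j) + ∑ j, α.2 j)
        * ((((∏ j, (α.1 j).factorial) * ∏ j, (α.2 j).factorial : ℕ)) : ℝ)) ^ (-(1:ℝ)/2))
    * Real.exp ((∑ j, ((X.1 j) ^ 2 + (X.2 j) ^ 2)) / 2)
    * multiDeriv2 d α (fun Y => Real.exp (-(∑ j, ((Y.1 j) ^ 2 + (Y.2 j) ^ 2)))) X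


/-!
Put `K_y(t) = f(y - t/2) conj(g(y + t/2))`, so that `W_{f,g}(y,η) = (2π)^{-d/2} 𝓕K_y(-η/2π)`.
Since `(1 + |y|)(1 + |t|) ≤ ((1 + |y - t/2|)(1 + |y + t/2|))²`, the Schwartz decay of `f` and `g`
makes every derivative of `K_y` decay jointly in `y` and `t`; hence `𝓕K_y(w)` decays jointly in
`y` and `w`, and `W_{f,g}` is integrable on `ℝ^{2d}`. By Fubini we may integrate in `η` first, and
Fourier inversion gives `∫ W_{f,g}(y,η) e^{-2i⟨x,η⟩} dη = (2π)^{d/2} f(y - x) conj(g(y + x))`.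
The remaining integral in `y` is `W_{f̌,g}(x,ξ)` after the substitution `t = 2y`.
-/

open scoped FourierTransform RealInnerProductSpace ComplexConjugate SchwartzMap ContDiff

section WignerKernel

variable {V F : Type*} [NormedAddCommGroup V] [NormedSpace ℝ V]
  [NormedAddCommGroup F] [NormedSpace ℝ F]

theorem norm_iteratedFDeriv_comp_add_smul_le {f : V → F} {i : ℕ} (hf : ContDiff ℝ i f)
    {c : ℝ} (hc : |c| ≤ 1) (y t : V) :
    ‖iteratedFDeriv ℝ i (fun s => f (y + c • s)) t‖ ≤ ‖iteratedFDeriv ℝ i f (y + c • t)‖ := by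
  have hshift : ContDiff ℝ i (fun z => f (y + z)) := hf.comp (contDiff_const.add contDiff_id)
  rw [iteratedFDeriv_comp_const_smul c hshift]
  dsimp only
  rw [iteratedFDeriv_comp_add_left, norm_smul, norm_pow, Real.norm_eq_abs]
  exact mul_le_of_le_one_left (norm_nonneg _) (pow_le_one₀ (abs_nonneg c) hc)

theorem one_add_norm_mul_one_add_norm_le (y t : V) :
    (1 + ‖y‖) * (1 + ‖t‖)
      ≤ ((1 + ‖y - (2:ℝ)⁻¹ • t‖) * (1 + ‖y + (2:ℝ)⁻¹ • t‖)) ^ 2 := by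
  set a := ‖y - (2:ℝ)⁻¹ • t‖
  set b := ‖y + (2:ℝ)⁻¹ • t‖
  have ha : 0 ≤ a := norm_nonneg _
  have hb : 0 ≤ b := norm_nonneg _
  have hy : ‖y‖ ≤ a + b := by
    have h2y : ‖(2:ℝ) • y‖ ≤ a + b := by
      have : (y - (2:ℝ)⁻¹ • t) + (y + (2:ℝ)⁻¹ • t) = (2:ℝ) • y := by
        rw [sub_add_add_cancel, two_smul]
      rw [← this]
      exact norm_add_le _ _
    rw [norm_smul, Real.norm_two] at h2y
    linarith [norm_nonneg y]
  have ht : ‖t‖ ≤ b + a := by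
    have : (y + (2:ℝ)⁻¹ • t) - (y - (2:ℝ)⁻¹ • t) = t := by
      rw [add_sub_sub_cancel, ← two_smul ℝ, smul_smul]; norm_num
    rw [← this]
    exact norm_sub_le _ _
  have hab : 1 + a + b ≤ (1 + a) * (1 + b) := by nlinarith [mul_nonneg ha hb]
  rw [sq]
  exact mul_le_mul (by linarith) (by linarith) (by positivity) (by positivity)

def wignerKernel (f g : V → ℂ) (y t : V) : ℂ :=
  f (y - (2:ℝ)⁻¹ • t) * conj (g (y + (2:ℝ)⁻¹ • t))

theorem wignerKernel_eq_add_smul (f g : V → ℂ) (y : V) :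
    wignerKernel f g y = fun s => f (y + (-(2:ℝ)⁻¹) • s) * conj (g (y + (2:ℝ)⁻¹ • s)) := by
  ext s; simp only [wignerKernel, neg_smul, ← sub_eq_add_neg]

theorem contDiff_wignerKernel {f g : V → ℂ} {n : WithTop ℕ∞} (hf : ContDiff ℝ n f)
    (hg : ContDiff ℝ n g) (y : V) : ContDiff ℝ n (wignerKernel f g y) := by
  rw [wignerKernel_eq_add_smul]
  exact (hf.comp (by fun_prop)).mul (conjCLE.contDiff.comp (hg.comp (by fun_prop)))

theorem continuous_wignerKernel {f g : V → ℂ} (hf : Continuous f) (hg : Continuous g) :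
    Continuous fun p : V × V => wignerKernel f g p.1 p.2 := by
  unfold wignerKernel; fun_prop

theorem norm_iteratedFDeriv_wignerKernel_le {f g : V → ℂ} {j : ℕ} (hf : ContDiff ℝ j f)
    (hg : ContDiff ℝ j g) (y t : V) :
    ‖iteratedFDeriv ℝ j (wignerKernel f g y) t‖ ≤ ∑ i ∈ Finset.range (j + 1), (j.choose i : ℝ)
      * ‖iteratedFDeriv ℝ i f (y - (2:ℝ)⁻¹ • t)‖
      * ‖iteratedFDeriv ℝ (j - i) g (y + (2:ℝ)⁻¹ • t)‖ := by
  have hFs : ContDiff ℝ j fun s => f (y + (-(2:ℝ)⁻¹) • s) := hf.comp (by fun_prop)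
  have hGs : ContDiff ℝ j fun s => conj (g (y + (2:ℝ)⁻¹ • s)) :=
    conjCLE.contDiff.comp (hg.comp (by fun_prop))
  rw [wignerKernel_eq_add_smul]
  refine (norm_iteratedFDeriv_mul_le hFs hGs t le_rfl).trans (Finset.sum_le_sum fun i hi => ?_)
  have hij : i ≤ j := Nat.lt_succ_iff.mp (Finset.mem_range.mp hi)
  have hF := norm_iteratedFDeriv_comp_add_smul_le (hf.of_le (by exact_mod_cast hij))
    (c := -(2:ℝ)⁻¹) (by norm_num [abs_of_pos]) y t
  have hG := norm_iteratedFDeriv_comp_add_smul_le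
    (hg.of_le (by exact_mod_cast j.sub_le i)) (c := (2:ℝ)⁻¹) (by norm_num [abs_of_pos]) y t
  rw [neg_smul, ← sub_eq_add_neg] at hF
  rw [show (fun s => conj (g (y + (2:ℝ)⁻¹ • s))) = conjLIE ∘ fun s => g (y + (2:ℝ)⁻¹ • s)
    from rfl, LinearIsometryEquiv.norm_iteratedFDeriv_comp_left]
  gcongr

theorem SchwartzMap.exists_one_add_norm_pow_mul_le (f : 𝓢(V, ℂ)) (k n : ℕ) :
    ∃ S, ∀ i ≤ n, ∀ u, (1 + ‖u‖) ^ k * ‖iteratedFDeriv ℝ i f u‖ ≤ S :=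
  ⟨_, fun _ hi u => one_add_le_sup_seminorm_apply (𝕜 := ℝ) (m := (k, n)) le_rfl hi f u⟩

theorem exists_norm_iteratedFDeriv_wignerKernel_le (f g : 𝓢(V, ℂ)) (M n : ℕ) :
    ∃ C, ∀ j ≤ n, ∀ y t : V, ‖iteratedFDeriv ℝ j (wignerKernel ⇑f ⇑g y) t‖
      ≤ C * ((1 + ‖y‖) ^ M)⁻¹ * ((1 + ‖t‖) ^ M)⁻¹ := by
  obtain ⟨Sf, hSf⟩ := f.exists_one_add_norm_pow_mul_le (2 * M) n
  obtain ⟨Sg, hSg⟩ := g.exists_one_add_norm_pow_mul_le (2 * M) n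
  have hSf0 : 0 ≤ Sf := (by positivity : (0:ℝ) ≤ _).trans (hSf 0 n.zero_le 0)
  refine ⟨2 ^ n * (Sf * Sg), fun j hj y t => ?_⟩
  set u := y - (2:ℝ)⁻¹ • t
  set v := y + (2:ℝ)⁻¹ • t
  have hweight : ((1 + ‖y‖) * (1 + ‖t‖)) ^ M ≤ (1 + ‖u‖) ^ (2 * M) * (1 + ‖v‖) ^ (2 * M) := by
    calc _ ≤ (((1 + ‖u‖) * (1 + ‖v‖)) ^ 2) ^ M :=
          pow_le_pow_left₀ (by positivity) (one_add_norm_mul_one_add_norm_le y t) M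
      _ = _ := by rw [← pow_mul, mul_pow]
  rw [mul_assoc, ← mul_inv, le_mul_inv_iff₀ (by positivity), mul_comm, ← mul_pow]
  calc ((1 + ‖y‖) * (1 + ‖t‖)) ^ M * ‖iteratedFDeriv ℝ j (wignerKernel ⇑f ⇑g y) t‖
      ≤ ((1 + ‖u‖) ^ (2 * M) * (1 + ‖v‖) ^ (2 * M)) * ∑ i ∈ Finset.range (j + 1),
          (j.choose i : ℝ) * ‖iteratedFDeriv ℝ i f u‖ * ‖iteratedFDeriv ℝ (j - i) g v‖ :=
        mul_le_mul hweight (norm_iteratedFDeriv_wignerKernel_le (f.smooth j) (g.smooth j) y t)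
          (norm_nonneg _) (by positivity)
    _ ≤ ∑ i ∈ Finset.range (j + 1), (j.choose i : ℝ) * (Sf * Sg) := by
        rw [Finset.mul_sum]
        refine Finset.sum_le_sum fun i hi => ?_
        have hij : i ≤ n := (Nat.lt_succ_iff.mp (Finset.mem_range.mp hi)).trans hj
        calc _ = (j.choose i : ℝ) * (((1 + ‖u‖) ^ (2 * M) * ‖iteratedFDeriv ℝ i f u‖)
              * ((1 + ‖v‖) ^ (2 * M) * ‖iteratedFDeriv ℝ (j - i) g v‖)) := by ring
          _ ≤ _ := mul_le_mul_of_nonneg_left (mul_le_mul (hSf i hij u)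
              (hSg (j - i) ((j.sub_le i).trans hj) v) (by positivity) hSf0) (by positivity)
    _ = 2 ^ j * (Sf * Sg) := by
        rw [← Finset.sum_mul, ← Nat.cast_sum, Nat.sum_range_choose, Nat.cast_pow, Nat.cast_two]
    _ ≤ 2 ^ n * (Sf * Sg) := by
        have hSg0 : 0 ≤ Sg := (by positivity : (0:ℝ) ≤ _).trans (hSg 0 n.zero_le 0)
        gcongr; norm_num

end WignerKernel

section FourierDecay

open Module

variable {V E : Type*} [NormedAddCommGroup V] [InnerProductSpace ℝ V] [FiniteDimensional ℝ V]
  [MeasurableSpace V] [BorelSpace V] [NormedAddCommGroup E] [NormedSpace ℂ E]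

theorem integrable_inv_one_add_norm_pow {r : ℕ} (hr : finrank ℝ V < r) :
    Integrable (fun v : V => ((1 + ‖v‖) ^ r)⁻¹) := by
  refine (integrable_one_add_norm (E := V) (μ := volume) (r := r) (by exact_mod_cast hr)).congr
    (.of_forall fun v => ?_)
  simp only [Real.rpow_neg (by positivity : (0:ℝ) ≤ 1 + ‖v‖), Real.rpow_natCast]

theorem pow_mul_norm_fourier_le_sum_integral {h : V → E} {n : ℕ} (hh : ContDiff ℝ n h)
    (hint : ∀ j ≤ n, Integrable (fun v => ‖iteratedFDeriv ℝ j h v‖)) (w : V) :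
    ‖w‖ ^ n * ‖𝓕 h w‖ ≤ 2 ^ n * ∑ j ∈ Finset.range (n + 1), ∫ v, ‖iteratedFDeriv ℝ j h v‖ := by
  have := Real.pow_mul_norm_iteratedFDeriv_fourier_le (K := 0) (N := n) (k := 0) (n := n)
    (by exact_mod_cast hh) (fun k j hk hj => by
      obtain rfl : k = 0 := by exact_mod_cast nonpos_iff_eq_zero.mp hk
      simpa using hint j (by exact_mod_cast hj)) le_rfl le_rfl w
  simpa only [norm_iteratedFDeriv_zero, pow_zero, zero_add, one_mul, Finset.range_one,
    Finset.singleton_product, Finset.sum_map, Function.Embedding.coeFn_mk, CharP.cast_eq_zero,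
    mul_zero] using this

theorem exists_norm_fourier_le_of_norm_iteratedFDeriv_le (n : ℕ) {r : ℕ} (hr : finrank ℝ V < r) :
    ∃ A : ℝ, ∀ (h : V → E) (C : ℝ), ContDiff ℝ n h →
      (∀ j ≤ n, ∀ v, ‖iteratedFDeriv ℝ j h v‖ ≤ C * ((1 + ‖v‖) ^ r)⁻¹) →
      ∀ w, ‖𝓕 h w‖ ≤ A * C * ((1 + ‖w‖) ^ n)⁻¹ := by
  set I := ∫ v : V, ((1 + ‖v‖) ^ r)⁻¹
  refine ⟨2 ^ n * (1 + 2 ^ n * (n + 1)) * I, fun h C hh hpt w => ?_⟩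
  have hint : ∀ j ≤ n, Integrable (fun v => ‖iteratedFDeriv ℝ j h v‖) := fun j hj =>
    ((integrable_inv_one_add_norm_pow hr).const_mul C).mono'
      (hh.continuous_iteratedFDeriv (by exact_mod_cast hj)).norm.aestronglyMeasurable
      (.of_forall fun v => by simpa only [norm_norm] using hpt j hj v)
  have hintegral : ∀ j ≤ n, ∫ v, ‖iteratedFDeriv ℝ j h v‖ ≤ C * I := fun j hj => by
    rw [← integral_const_mul]
    exact integral_mono (hint j hj) ((integrable_inv_one_add_norm_pow hr).const_mul C) (hpt j hj)
  have h0 : ‖𝓕 h w‖ ≤ C * I := by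
    have := pow_mul_norm_fourier_le_sum_integral (hh.of_le (by exact_mod_cast n.zero_le))
      (fun j hj => hint j (hj.trans n.zero_le)) w
    simp only [pow_zero, one_mul, zero_add, Finset.sum_range_one] at this
    exact this.trans (hintegral 0 n.zero_le)
  have hn : ‖w‖ ^ n * ‖𝓕 h w‖ ≤ 2 ^ n * ((n + 1) * (C * I)) := by
    refine (pow_mul_norm_fourier_le_sum_integral hh hint w).trans ?_
    gcongr
    calc _ ≤ ∑ _j ∈ Finset.range (n + 1), C * I := Finset.sum_le_sum fun j hj =>
          hintegral j (Nat.lt_succ_iff.mp (Finset.mem_range.mp hj))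
      _ = _ := by simp
  rw [le_mul_inv_iff₀ (by positivity), mul_comm]
  calc (1 + ‖w‖) ^ n * ‖𝓕 h w‖ ≤ (2 ^ n * (1 + ‖w‖ ^ n)) * ‖𝓕 h w‖ := by
        gcongr
        calc (1 + ‖w‖) ^ n ≤ 2 ^ (n - 1) * (1 ^ n + ‖w‖ ^ n) :=
              add_pow_le zero_le_one (norm_nonneg w) n
          _ ≤ 2 ^ n * (1 + ‖w‖ ^ n) := by
              rw [one_pow]; gcongr; exacts [one_le_two, n.sub_le 1]
    _ = 2 ^ n * (‖𝓕 h w‖ + ‖w‖ ^ n * ‖𝓕 h w‖) := by ring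
    _ ≤ 2 ^ n * (C * I + 2 ^ n * ((n + 1) * (C * I))) := by gcongr
    _ = _ := by ring

end FourierDecay

section Wigner

open Module

variable {V : Type*} [NormedAddCommGroup V] [InnerProductSpace ℝ V] [FiniteDimensional ℝ V]
  [MeasurableSpace V] [BorelSpace V]

def wignerDist (f g : V → ℂ) (p : V × V) : ℂ :=
  (((2 * π) ^ (-(finrank ℝ V : ℝ) / 2) : ℝ) : ℂ) *
    ∫ t, wignerKernel f g p.1 t * Complex.exp (I * ((⟪t, p.2⟫ : ℝ) : ℂ))

def symplecticFourier (a : V × V → ℂ) (X : V × V) : ℂ :=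
  (((π ^ finrank ℝ V : ℝ)⁻¹ : ℝ) : ℂ) *
    ∫ Y, a Y * Complex.exp (2 * I * ((⟪Y.1, X.2⟫ - ⟪X.1, Y.2⟫ : ℝ) : ℂ))

theorem wignerDist_eq_fourier (f g : V → ℂ) (y η : V) :
    wignerDist f g (y, η) = (((2 * π) ^ (-(finrank ℝ V : ℝ) / 2) : ℝ) : ℂ) *
      𝓕 (wignerKernel f g y) (-(2 * π)⁻¹ • η) := by
  rw [wignerDist, Real.fourier_eq']
  congr 2 with t
  rw [smul_eq_mul, mul_comm, real_inner_smul_right]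
  congr 2
  push_cast
  field_simp

theorem integral_fourier_smul_mul_exp_neg_inner {h : V → ℂ} (hh : Integrable h)
    (hFh : Integrable (𝓕 h)) {s : V} (hs : ContinuousAt h s) :
    ∫ η, 𝓕 h (-(2 * π)⁻¹ • η) * Complex.exp (-(I * ((⟪s, η⟫ : ℝ) : ℂ)))
      = (((2 * π) ^ finrank ℝ V : ℝ) : ℂ) * h s := by
  -- the substitution `η = -2π w` turns the left side into `(2π)^n 𝓕⁻(𝓕 h)(s)`
  have h2π : (-(2 * π))⁻¹ = -(2 * π)⁻¹ := by rw [inv_neg]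
  have := Measure.integral_comp_inv_smul (μ := volume)
    (fun w => 𝓕 h w * Complex.exp (((2 * π * ⟪w, s⟫ : ℝ) : ℂ) * I)) (-(2 * π))
  rw [h2π] at this
  calc _ = ∫ η, 𝓕 h (-(2 * π)⁻¹ • η)
        * Complex.exp (((2 * π * ⟪-(2 * π)⁻¹ • η, s⟫ : ℝ) : ℂ) * I) := by
          congr 1 with η
          rw [real_inner_smul_left, real_inner_comm]
          congr 2
          push_cast
          field_simp
    _ = (((2 * π) ^ finrank ℝ V : ℝ) : ℂ) * 𝓕⁻ (𝓕 h) s := by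
          rw [this, Real.fourierInv_eq', abs_pow, abs_neg, abs_of_pos Real.two_pi_pos,
            Complex.real_smul]
          simp_rw [smul_eq_mul, mul_comm (𝓕 h _)]
    _ = _ := by rw [hh.fourierInv_fourier_eq hFh hs]

theorem exists_norm_fourier_wignerKernel_le (f g : 𝓢(V, ℂ)) :
    ∃ B, ∀ y w : V, ‖𝓕 (wignerKernel ⇑f ⇑g y) w‖
      ≤ B * ((1 + ‖y‖) ^ (finrank ℝ V + 1))⁻¹ * ((1 + ‖w‖) ^ (finrank ℝ V + 1))⁻¹ := by
  obtain ⟨A, hA⟩ := exists_norm_fourier_le_of_norm_iteratedFDeriv_le (V := V) (E := ℂ)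
    (finrank ℝ V + 1) (Nat.lt_succ_self _)
  obtain ⟨C, hC⟩ := exists_norm_iteratedFDeriv_wignerKernel_le f g (finrank ℝ V + 1)
    (finrank ℝ V + 1)
  refine ⟨A * C, fun y w => ?_⟩
  rw [mul_assoc A]
  exact hA _ _ ((contDiff_wignerKernel (f.smooth ⊤) (g.smooth ⊤) y).of_le
    (by exact_mod_cast le_top)) (fun j hj t => hC j hj y t) w

theorem integrable_wignerKernel (f g : 𝓢(V, ℂ)) (y : V) : Integrable (wignerKernel ⇑f ⇑g y) := by
  obtain ⟨C, hC⟩ := exists_norm_iteratedFDeriv_wignerKernel_le f g (finrank ℝ V + 1) 0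
  refine ((integrable_inv_one_add_norm_pow (Nat.lt_succ_self _)).const_mul
    (C * ((1 + ‖y‖) ^ (finrank ℝ V + 1))⁻¹)).mono'
    (contDiff_wignerKernel (f.smooth ⊤) (g.smooth ⊤) y).continuous.aestronglyMeasurable
    (.of_forall fun t => ?_)
  simpa only [norm_iteratedFDeriv_zero] using hC 0 le_rfl y t

theorem integrable_fourier_wignerKernel (f g : 𝓢(V, ℂ)) (y : V) :
    Integrable (𝓕 (wignerKernel ⇑f ⇑g y)) := by
  obtain ⟨B, hB⟩ := exists_norm_fourier_wignerKernel_le f g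
  exact ((integrable_inv_one_add_norm_pow (Nat.lt_succ_self _)).const_mul
    (B * ((1 + ‖y‖) ^ (finrank ℝ V + 1))⁻¹)).mono'
    (VectorFourier.fourierIntegral_continuous Real.continuous_fourierChar
      (by exact continuous_inner) (integrable_wignerKernel f g y)).aestronglyMeasurable
    (.of_forall (hB y))

theorem integral_wignerDist_mul_exp (f g : 𝓢(V, ℂ)) (y s : V) :
    ∫ η, wignerDist ⇑f ⇑g (y, η) * Complex.exp (-(I * ((⟪s, η⟫ : ℝ) : ℂ)))
      = (((2 * π) ^ (-(finrank ℝ V : ℝ) / 2) : ℝ) : ℂ) * (((2 * π) ^ finrank ℝ V : ℝ) : ℂ)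
        * wignerKernel ⇑f ⇑g y s := by
  simp_rw [wignerDist_eq_fourier, mul_assoc]
  rw [integral_const_mul, integral_fourier_smul_mul_exp_neg_inner (integrable_wignerKernel f g y)
    (integrable_fourier_wignerKernel f g y)
    ((contDiff_wignerKernel (f.smooth ⊤) (g.smooth ⊤) y).continuous.continuousAt)]

theorem integrable_wignerDist (f g : 𝓢(V, ℂ)) : Integrable (wignerDist ⇑f ⇑g) := by
  obtain ⟨B, hB⟩ := exists_norm_fourier_wignerKernel_le f g
  set c := (2 * π) ^ (-(finrank ℝ V : ℝ) / 2)
  have hdecay := integrable_inv_one_add_norm_pow (V := V) (Nat.lt_succ_self _)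
  have hmeas : AEStronglyMeasurable (wignerDist ⇑f ⇑g) := by
    have hcont : Continuous fun q : (V × V) × V =>
        wignerKernel ⇑f ⇑g q.1.1 q.2 * Complex.exp (I * ((⟪q.2, q.1.2⟫ : ℝ) : ℂ)) :=
      ((continuous_wignerKernel f.continuous g.continuous).comp
        (continuous_fst.fst.prodMk continuous_snd)).mul (by fun_prop)
    exact (hcont.aestronglyMeasurable.integral_prod_right').const_mul _
  refine ((hdecay.mul_prod (hdecay.comp_smul (neg_ne_zero.mpr (inv_ne_zero
    Real.two_pi_pos.ne')))).const_mul (c * B)).mono' hmeas (.of_forall fun p => ?_)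
  rw [wignerDist_eq_fourier, norm_mul, Complex.norm_real, Real.norm_of_nonneg (by positivity),
    mul_assoc]
  refine mul_le_mul_of_nonneg_left ?_ (by positivity)
  simpa only [mul_assoc] using hB p.1 (-(2 * π)⁻¹ • p.2)

theorem symplecticFourier_wignerDist_eq (f g : 𝓢(V, ℂ)) (x ξ : V) :
    symplecticFourier (wignerDist ⇑f ⇑g) (x, ξ)
      = (((π ^ finrank ℝ V : ℝ)⁻¹ : ℝ) : ℂ) * ((((2 * π) ^ (-(finrank ℝ V : ℝ) / 2) : ℝ) : ℂ)
        * (((2 * π) ^ finrank ℝ V : ℝ) : ℂ) * ∫ y, f (y - x) * conj (g (y + x))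
          * Complex.exp (2 * I * ((⟪y, ξ⟫ : ℝ) : ℂ))) := by
  have hint : Integrable (fun Y : V × V => wignerDist ⇑f ⇑g Y
      * Complex.exp (2 * I * ((⟪Y.1, ξ⟫ - ⟪x, Y.2⟫ : ℝ) : ℂ))) (volume.prod volume) :=
    (integrable_wignerDist f g).mul_bdd (c := 1) (by fun_prop : Continuous _).aestronglyMeasurable
      (.of_forall fun Y => by rw [Complex.norm_exp]; simp)
  rw [symplecticFourier, Measure.volume_eq_prod, integral_prod _ hint]
  congr 1
  calc _ = ∫ y, Complex.exp (2 * I * ((⟪y, ξ⟫ : ℝ) : ℂ))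
        * ((((2 * π) ^ (-(finrank ℝ V : ℝ) / 2) : ℝ) : ℂ) * (((2 * π) ^ finrank ℝ V : ℝ) : ℂ)
          * wignerKernel ⇑f ⇑g y ((2:ℝ) • x)) := by
        congr 1 with y
        rw [← integral_wignerDist_mul_exp, ← integral_const_mul]
        congr 1 with η
        rw [mul_left_comm, ← Complex.exp_add, real_inner_smul_left]
        congr 3
        push_cast
        ring
    _ = _ := by
        rw [← integral_const_mul]
        congr 1 with y
        rw [wignerKernel, smul_smul, inv_mul_cancel₀ two_ne_zero, one_smul]
        ring

theorem wignerDist_comp_neg_eq (f g : V → ℂ) (x ξ : V) :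
    wignerDist (fun z => f (-z)) g (x, ξ)
      = (((2 * π) ^ (-(finrank ℝ V : ℝ) / 2) : ℝ) : ℂ) * (((2 : ℝ) ^ finrank ℝ V : ℝ) : ℂ)
        * ∫ y, f (y - x) * conj (g (y + x)) * Complex.exp (2 * I * ((⟪y, ξ⟫ : ℝ) : ℂ)) := by
  have := Measure.integral_comp_smul volume (fun t => f (-(x - (2:ℝ)⁻¹ • t))
    * conj (g (x + (2:ℝ)⁻¹ • t)) * Complex.exp (I * ((⟪t, ξ⟫ : ℝ) : ℂ))) 2
  rw [abs_inv, abs_pow, abs_two, ← Complex.coe_smul, Complex.ofReal_inv, smul_eq_mul,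
    eq_inv_mul_iff_mul_eq₀ (by simp)] at this
  simp only [wignerDist, wignerKernel]
  rw [← this, ← mul_assoc]
  simp only [smul_smul, inv_mul_cancel₀ (two_ne_zero' ℝ), one_smul, neg_sub,
    real_inner_smul_left, add_comm x]
  push_cast
  ring_nf

theorem symplecticFourier_wignerDist (f g : 𝓢(V, ℂ)) (X : V × V) :
    symplecticFourier (wignerDist ⇑f ⇑g) X = wignerDist (fun x => f (-x)) ⇑g X := by
  obtain ⟨x, ξ⟩ := X
  rw [symplecticFourier_wignerDist_eq, wignerDist_comp_neg_eq, ← mul_assoc]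
  congr 1
  push_cast
  rw [mul_pow]
  field_simp

end Wigner

section Coordinates

open WithLp

theorem wigner_eq_wignerDist {d : ℕ} (f g : RR d → ℂ) (Y : RR2 d) :
    wigner d f g Y = wignerDist (V := EuclideanSpace ℝ (Fin d)) (f ∘ ofLp) (g ∘ ofLp)
      (toLp 2 Y.1, toLp 2 Y.2) := by
  rw [wigner, wignerDist, finrank_euclideanSpace_fin,
    ← (EuclideanSpace.volume_preserving_symm_measurableEquiv_toLp (Fin d)).integral_comp']
  congr 2 with t
  simp [wignerKernel, PiLp.inner_apply, mul_comm]

theorem symplFT_eq_symplecticFourier {d : ℕ} (a : RR2 d → ℂ) (X : RR2 d) :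
    symplFT d a X = symplecticFourier (V := EuclideanSpace ℝ (Fin d))
      (fun Y => a (ofLp Y.1, ofLp Y.2)) (toLp 2 X.1, toLp 2 X.2) := by
  have e := EuclideanSpace.volume_preserving_symm_measurableEquiv_toLp (Fin d)
  rw [symplFT, symplecticFourier, finrank_euclideanSpace_fin, Measure.volume_eq_prod,
    ← (e.prod e).integral_comp' (f := (MeasurableEquiv.toLp 2 (Fin d → ℝ)).symm.prodCongr
      (MeasurableEquiv.toLp 2 (Fin d → ℝ)).symm)]
  congr 2 with Y
  simp [sform, PiLp.inner_apply, MeasurableEquiv.prodCongr, mul_comm]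
  exact mul_comm _ _

end Coordinates

theorem symplFT_wigner_general
    (d : ℕ) (f g : SchwartzMap (RR d) ℂ) (X : RR2 d) :
    symplFT d (wigner d ⇑f ⇑g) X = wigner d (fun x => f (-x)) ⇑g X := by
  let toEuclidean := SchwartzMap.compCLMOfContinuousLinearEquiv (F := ℂ) ℝ
    (EuclideanSpace.equiv (Fin d) ℝ)
  rw [symplFT_eq_symplecticFourier, wigner_eq_wignerDist]
  simp_rw [wigner_eq_wignerDist]
  exact symplecticFourier_wignerDist (toEuclidean f) (toEuclidean g) _

/-- `F_σ(W_{f,g}) = W_{f̌,g}` for Schwartz `f, g`, where `f̌(x) = f(−x)`. -/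
theorem symplFT_wigner
    (d : ℕ) (hd : 0 < d) (f g : SchwartzMap (RR d) ℂ) (X : RR2 d) :
    symplFT d (wigner d ⇑f ⇑g) X = wigner d (fun x => f (-x)) ⇑g X :=
  symplFT_wigner_general d f g X

end
end

section
/- For every smooth function f on R^{2d}, H_σ f = −(1/2) Σ_{j=1}^d (Z_{2,j}(Z̃_{2,j} f) + Z̃_{2,j}(Z_{2,j} f)) and H̄_σ f = −(1/2) Σ_{j=1}^d (Z_{1,j}(Z̃_{1,j} f) + Z̃_{1,j}(Z_{1,j} f)); that is, H_σ and H̄_σ factor through the symplectic annihilation and creation operators. -/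
open MeasureTheory Complex
open scoped Real BigOperators Nat ENNReal

noncomputable section

noncomputable def coordL (d : ℕ) (j : Fin d) (c : ℂ) : RR2 d →L[ℝ] ℂ :=
  Complex.ofRealCLM.comp ((ContinuousLinearMap.proj j).comp
    (ContinuousLinearMap.fst ℝ (Fin d → ℝ) (Fin d → ℝ)))
  + c • Complex.ofRealCLM.comp ((ContinuousLinearMap.proj j).comp
    (ContinuousLinearMap.snd ℝ (Fin d → ℝ) (Fin d → ℝ)))

lemma coordL_apply (d : ℕ) (j : Fin d) (c : ℂ) (v : RR2 d) :
    coordL d j c v = ((v.1 j : ℝ) : ℂ) + c * ((v.2 j : ℝ) : ℂ) := by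
  simp [coordL, smul_eq_mul]

lemma fderiv_mix {d : ℕ} (j : Fin d) (p v : RR2 d) (a b s c : ℂ)
    {f g1 g2 : RR2 d → ℂ}
    (hf : DifferentiableAt ℝ f p) (h1 : DifferentiableAt ℝ g1 p)
    (h2 : DifferentiableAt ℝ g2 p) :
    fderiv ℝ (fun q => a * (g1 q + b * g2 q)
        + s * ((((q.1 j : ℝ) : ℂ) + c * ((q.2 j : ℝ) : ℂ)) * f q)) p v
      = a * (fderiv ℝ g1 p v + b * fderiv ℝ g2 p v)
        + s * ((((v.1 j : ℝ) : ℂ) + c * ((v.2 j : ℝ) : ℂ)) * f p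
            + (((p.1 j : ℝ) : ℂ) + c * ((p.2 j : ℝ) : ℂ)) * fderiv ℝ f p v) := by
  have hLfun : (fun q : RR2 d => (((q.1 j : ℝ) : ℂ) + c * ((q.2 j : ℝ) : ℂ)))
      = ⇑(coordL d j c) := by
    funext q; rw [coordL_apply]
  have Hc : HasFDerivAt (fun q : RR2 d => (((q.1 j : ℝ) : ℂ) + c * ((q.2 j : ℝ) : ℂ)))
      (coordL d j c) p := by
    rw [hLfun]; exact (coordL d j c).hasFDerivAt
  have Hprod := Hc.mul hf.hasFDerivAt
  have Htot := (((h1.hasFDerivAt.add (h2.hasFDerivAt.const_mul b)).const_mul a).add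
    (Hprod.const_mul s))
  rw [show fderiv ℝ (fun q : RR2 d => a * (g1 q + b * g2 q)
      + s * ((((q.1 j : ℝ) : ℂ) + c * ((q.2 j : ℝ) : ℂ)) * f q)) p = _ from Htot.fderiv]
  simp only [ContinuousLinearMap.add_apply, ContinuousLinearMap.smul_apply, smul_eq_mul,
    coordL_apply]
  ring

lemma contDiff_pd1 {d : ℕ} (j : Fin d) {f : RR2 d → ℂ} (hf : ContDiff ℝ (⊤ : ℕ∞) f) :
    ContDiff ℝ (⊤ : ℕ∞) (pd1 d j f) :=
  (hf.fderiv_right ((by simp))).clm_apply contDiff_const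

lemma contDiff_pd2 {d : ℕ} (j : Fin d) {f : RR2 d → ℂ} (hf : ContDiff ℝ (⊤ : ℕ∞) f) :
    ContDiff ℝ (⊤ : ℕ∞) (pd2 d j f) :=
  (hf.fderiv_right ((by simp))).clm_apply contDiff_const

lemma pd1_mix {d : ℕ} (j : Fin d) (p : RR2 d) (a b s c : ℂ)
    {f g1 g2 : RR2 d → ℂ}
    (hf : DifferentiableAt ℝ f p) (h1 : DifferentiableAt ℝ g1 p)
    (h2 : DifferentiableAt ℝ g2 p) :
    pd1 d j (fun q => a * (g1 q + b * g2 q)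
        + s * ((((q.1 j : ℝ) : ℂ) + c * ((q.2 j : ℝ) : ℂ)) * f q)) p
      = a * (pd1 d j g1 p + b * pd1 d j g2 p)
        + s * (f p + (((p.1 j : ℝ) : ℂ) + c * ((p.2 j : ℝ) : ℂ)) * pd1 d j f p) := by
  simp only [pd1]
  rw [fderiv_mix j p _ a b s c hf h1 h2]
  simp [Pi.single_eq_same]

lemma pd2_mix {d : ℕ} (j : Fin d) (p : RR2 d) (a b s c : ℂ)
    {f g1 g2 : RR2 d → ℂ}
    (hf : DifferentiableAt ℝ f p) (h1 : DifferentiableAt ℝ g1 p)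
    (h2 : DifferentiableAt ℝ g2 p) :
    pd2 d j (fun q => a * (g1 q + b * g2 q)
        + s * ((((q.1 j : ℝ) : ℂ) + c * ((q.2 j : ℝ) : ℂ)) * f q)) p
      = a * (pd2 d j g1 p + b * pd2 d j g2 p)
        + s * (c * f p + (((p.1 j : ℝ) : ℂ) + c * ((p.2 j : ℝ) : ℂ)) * pd2 d j f p) := by
  simp only [pd2]
  rw [fderiv_mix j p _ a b s c hf h1 h2]
  simp [Pi.single_eq_same]

lemma keyGen {d : ℕ} (j : Fin d) (p : RR2 d) (e : ℂ) {f : RR2 d → ℂ}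
    (hf : ContDiff ℝ (⊤ : ℕ∞) f)
    (Ze Zt : (RR2 d → ℂ) → RR2 d → ℂ)
    (hZe : ∀ g q, Ze g q = (1/2 : ℂ) * (pd1 d j g q + e * pd2 d j g q)
        + (((q.1 j : ℝ) : ℂ) + e * ((q.2 j : ℝ) : ℂ)) * g q)
    (hZt : ∀ g q, Zt g q = (1/2 : ℂ) * (pd1 d j g q - e * pd2 d j g q)
        - (((q.1 j : ℝ) : ℂ) - e * ((q.2 j : ℝ) : ℂ)) * g q) :
    Ze (Zt f) p + Zt (Ze f) p
      = (1/2 : ℂ) * (pd1 d j (pd1 d j f) p - (e*e) * pd2 d j (pd2 d j f) p)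
        + 2 * e * (((p.2 j : ℝ) : ℂ) * pd1 d j f p - ((p.1 j : ℝ) : ℂ) * pd2 d j f p)
        - 2 * ((((p.1 j : ℝ) : ℂ))^2 - (e*e) * (((p.2 j : ℝ) : ℂ))^2) * f p := by
  have hdf : DifferentiableAt ℝ f p := (hf.differentiable (by simp)).differentiableAt
  have h1 : ∀ q : RR2 d, DifferentiableAt ℝ (pd1 d j f) q :=
    fun q => ((contDiff_pd1 j hf).differentiable (by simp)).differentiableAt
  have h2 : ∀ q : RR2 d, DifferentiableAt ℝ (pd2 d j f) q :=
    fun q => ((contDiff_pd2 j hf).differentiable (by simp)).differentiableAt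
  have hZtf : Zt f = fun q => (1/2 : ℂ) * (pd1 d j f q + (-e) * pd2 d j f q)
      + (-1 : ℂ) * ((((q.1 j : ℝ) : ℂ) + (-e) * ((q.2 j : ℝ) : ℂ)) * f q) := by
    funext q; rw [hZt]; ring
  have hZef : Ze f = fun q => (1/2 : ℂ) * (pd1 d j f q + e * pd2 d j f q)
      + (1 : ℂ) * ((((q.1 j : ℝ) : ℂ) + e * ((q.2 j : ℝ) : ℂ)) * f q) := by
    funext q; rw [hZe]; ring
  rw [hZe (Zt f) p, hZt (Ze f) p, hZtf, hZef]
  rw [pd1_mix j p _ _ _ _ hdf (h1 p) (h2 p),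
      pd2_mix j p _ _ _ _ hdf (h1 p) (h2 p),
      pd1_mix j p _ _ _ _ hdf (h1 p) (h2 p),
      pd2_mix j p _ _ _ _ hdf (h1 p) (h2 p)]
  ring

/-- `H_σ` and `H̄_σ` factor through the symplectic annihilation and creation
operators: `H_σ f = −(1/2) Σ_j (Z_{2,j} Z̃_{2,j} + Z̃_{2,j} Z_{2,j}) f` and
`H̄_σ f = −(1/2) Σ_j (Z_{1,j} Z̃_{1,j} + Z̃_{1,j} Z_{1,j}) f`. -/
theorem Hsig_factorization
    (d : ℕ) (hd : 0 < d) (f : RR2 d → ℂ) (hf : ContDiff ℝ (⊤ : ℕ∞) f) :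
    (∀ p, Hsig d f p
        = -(1/2 : ℂ) * ∑ j, (Zop2 d j (Ztop2 d j f) p + Ztop2 d j (Zop2 d j f) p)) ∧
    (∀ p, Hbar d f p
        = -(1/2 : ℂ) * ∑ j, (Zop1 d j (Ztop1 d j f) p + Ztop1 d j (Zop1 d j f) p)) := by
  constructor
  · intro p
    have hk : ∀ j : Fin d, Zop2 d j (Ztop2 d j f) p + Ztop2 d j (Zop2 d j f) p
        = (1/2 : ℂ) * (pd1 d j (pd1 d j f) p + pd2 d j (pd2 d j f) p)
          + 2 * Complex.I * (((p.2 j : ℝ) : ℂ) * pd1 d j f p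
              - ((p.1 j : ℝ) : ℂ) * pd2 d j f p)
          - 2 * ((((p.1 j : ℝ) : ℂ))^2 + (((p.2 j : ℝ) : ℂ))^2) * f p := by
      intro j
      rw [keyGen j p Complex.I hf (Zop2 d j) (Ztop2 d j)
        (fun g q => rfl) (fun g q => rfl)]
      linear_combination (2 * (((p.2 j : ℝ) : ℂ))^2 * f p
        - (1/2 : ℂ) * pd2 d j (pd2 d j f) p) * Complex.I_mul_I
    simp only [hk, Hsig]
    push_cast
    rw [Finset.sum_mul, Finset.mul_sum, Finset.mul_sum,
      ← Finset.sum_sub_distrib, ← Finset.sum_add_distrib, ← Finset.sum_sub_distrib]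
    refine Finset.sum_congr rfl fun j _ => ?_
    ring
  · intro p
    have hk : ∀ j : Fin d, Zop1 d j (Ztop1 d j f) p + Ztop1 d j (Zop1 d j f) p
        = (1/2 : ℂ) * (pd1 d j (pd1 d j f) p + pd2 d j (pd2 d j f) p)
          - 2 * Complex.I * (((p.2 j : ℝ) : ℂ) * pd1 d j f p
              - ((p.1 j : ℝ) : ℂ) * pd2 d j f p)
          - 2 * ((((p.1 j : ℝ) : ℂ))^2 + (((p.2 j : ℝ) : ℂ))^2) * f p := by
      intro j
      rw [keyGen j p (-Complex.I) hf (Zop1 d j) (Ztop1 d j)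
        (fun g q => by simp only [Zop1]; ring) (fun g q => by simp only [Ztop1]; ring)]
      linear_combination (2 * (((p.2 j : ℝ) : ℂ))^2 * f p
        - (1/2 : ℂ) * pd2 d j (pd2 d j f) p) * Complex.I_mul_I
    simp only [hk, Hbar]
    push_cast
    rw [Finset.sum_mul, Finset.mul_sum, Finset.mul_sum,
      ← Finset.sum_sub_distrib, ← Finset.sum_sub_distrib, ← Finset.sum_add_distrib]
    refine Finset.sum_congr rfl fun j _ => ?_
    ring



end
end

section
/- For all a, b ∈ 𝒮(R^{2d}), the operator A turns the twisted convolution into operator composition: for all x, y ∈ R^d, A(a *_σ b)(x,y) = ∫_{R^d} (Aa)(x,t) (Ab)(t,y) dt; that is, A(a *_σ b) is the kernel of the composition of the operators with kernels Aa and Ab. -/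
open MeasureTheory Complex
open scoped Real BigOperators Nat ENNReal

noncomputable section

/-- Pointwise Schwartz decay bound with a `(1+‖x‖)^m` weight. -/
lemma schwartz_bound {E : Type*} [NormedAddCommGroup E] [NormedSpace ℝ E]
    (f : SchwartzMap E ℂ) (m : ℕ) :
    ∃ C : ℝ, 0 ≤ C ∧ ∀ x, (1 + ‖x‖) ^ m * ‖f x‖ ≤ C := by
  have h1 : ∀ i : ℕ, ∃ C, ∀ x, ‖x‖ ^ i * ‖f x‖ ≤ C := by
    intro i
    obtain ⟨C, hC⟩ := f.decay' i 0
    exact ⟨C, fun x => by have h := hC x; simp only [norm_iteratedFDeriv_zero] at h; exact h⟩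
  choose Cf hCf using h1
  have hCf0 : ∀ i, 0 ≤ Cf i := fun i => le_trans (by positivity) (hCf i 0)
  refine ⟨∑ i ∈ Finset.range (m + 1), (m.choose i : ℝ) * Cf i,
    Finset.sum_nonneg fun i _ => mul_nonneg (by positivity) (hCf0 i), fun x => ?_⟩
  have hx : (1 + ‖x‖) ^ m * ‖f x‖
      = ∑ i ∈ Finset.range (m + 1), (m.choose i : ℝ) * (‖x‖ ^ i * ‖f x‖) := by
    rw [add_comm, add_pow, Finset.sum_mul]
    refine Finset.sum_congr rfl fun i _ => by push_cast; ring
  rw [hx]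
  exact Finset.sum_le_sum fun i _ =>
    mul_le_mul_of_nonneg_left (hCf i x) (by positivity)

/-- Integrability of `(1+‖x‖)^m ‖f x‖` for Schwartz `f` on `ℝ^{2d}`. -/
lemma schwartz_integrable_weight (d : ℕ) (f : SchwartzMap (RR2 d) ℂ) (m : ℕ) :
    Integrable (fun z => (1 + ‖z‖) ^ m * ‖f z‖) (volume : Measure (RR2 d)) := by
  haveI : (volume : Measure (RR2 d)).IsAddHaarMeasure :=
    Measure.prod.instIsAddHaarMeasure volume volume
  have hx : (fun z : RR2 d => (1 + ‖z‖) ^ m * ‖f z‖)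
      = fun z => ∑ i ∈ Finset.range (m + 1), (m.choose i : ℝ) * (‖z‖ ^ i * ‖f z‖) := by
    funext z
    rw [add_comm, add_pow, Finset.sum_mul]
    refine Finset.sum_congr rfl fun i _ => by push_cast; ring
  rw [hx]
  exact integrable_finset_sum _ fun i _ => (f.integrable_pow_mul volume i).const_mul _

/-- Integrability of `(1+‖ξ‖)^{-(d+1)}` on `ℝ^d`. -/
lemma integrable_inv_weight (d : ℕ) :
    Integrable (fun ξ : RR d => ((1 + ‖ξ‖) ^ (d + 1) : ℝ)⁻¹) (volume : Measure (RR d)) := by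
  have hr : (Module.finrank ℝ (RR d) : ℝ) < (d + 1 : ℝ) := by
    rw [Module.finrank_fin_fun]; norm_num
  have h := integrable_one_add_norm (E := RR d) (μ := volume) hr
  refine h.congr (Filter.Eventually.of_forall fun ξ => ?_)
  have h1 : (0:ℝ) < 1 + ‖ξ‖ := by positivity
  show (1 + ‖ξ‖) ^ (-((d:ℝ) + 1)) = ((1 + ‖ξ‖) ^ (d + 1))⁻¹
  rw [Real.rpow_neg h1.le]
  norm_cast

/-- The decisive product bound. -/
lemma key_bound (d : ℕ) (a b : SchwartzMap (RR2 d) ℂ) (c : RR d) :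
    ∃ Ca : ℝ, 0 ≤ Ca ∧ ∀ (ξ : RR d) (Y : RR2 d),
      ‖a ((c, ξ) - Y)‖ * ‖b Y‖ ≤
        (((1 + ‖ξ‖) ^ (d + 1) : ℝ)⁻¹) * (Ca * ((1 + ‖Y‖) ^ (d + 1) * ‖b Y‖)) := by
  obtain ⟨Ca, hCa0, hCa⟩ := schwartz_bound a (d + 1)
  refine ⟨Ca, hCa0, fun ξ Y => ?_⟩
  set m := d + 1 with hm
  set z : RR2 d := ((c, ξ) : RR2 d) - Y with hz
  have hz2 : ‖ξ - Y.2‖ ≤ ‖z‖ := by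
    have := norm_snd_le z
    simpa [hz] using this
  have h1 : (1 + ‖ξ - Y.2‖) ^ m * ‖a z‖ ≤ Ca :=
    le_trans (mul_le_mul_of_nonneg_right
      (pow_le_pow_left₀ (by positivity) (by linarith) m) (norm_nonneg _)) (hCa z)
  have htri : ‖ξ‖ ≤ ‖ξ - Y.2‖ + ‖Y.2‖ := by
    calc ‖ξ‖ = ‖(ξ - Y.2) + Y.2‖ := by rw [sub_add_cancel]
    _ ≤ ‖ξ - Y.2‖ + ‖Y.2‖ := norm_add_le _ _
  have h2 : (1 + ‖ξ‖) ^ m ≤ (1 + ‖ξ - Y.2‖) ^ m * (1 + ‖Y.2‖) ^ m := by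
    rw [← mul_pow]
    apply pow_le_pow_left₀ (by positivity)
    nlinarith [norm_nonneg (ξ - Y.2), norm_nonneg Y.2]
  have h3 : (1 + ‖Y.2‖) ^ m ≤ (1 + ‖Y‖) ^ m :=
    pow_le_pow_left₀ (by positivity) (by linarith [norm_snd_le Y]) m
  have hb := norm_nonneg (b Y)
  have hinv : (0:ℝ) < (1 + ‖ξ‖) ^ m := by positivity
  rw [inv_mul_eq_div, le_div_iff₀ hinv]
  calc ‖a z‖ * ‖b Y‖ * (1 + ‖ξ‖) ^ m
      ≤ ‖a z‖ * ‖b Y‖ * ((1 + ‖ξ - Y.2‖) ^ m * (1 + ‖Y.2‖) ^ m) := by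
        apply mul_le_mul_of_nonneg_left h2 (by positivity)
    _ = ((1 + ‖ξ - Y.2‖) ^ m * ‖a z‖) * ((1 + ‖Y.2‖) ^ m * ‖b Y‖) := by ring
    _ ≤ Ca * ((1 + ‖Y.2‖) ^ m * ‖b Y‖) :=
        mul_le_mul_of_nonneg_right h1 (by positivity)
    _ ≤ Ca * ((1 + ‖Y‖) ^ m * ‖b Y‖) := by
        apply mul_le_mul_of_nonneg_left (mul_le_mul_of_nonneg_right h3 hb) hCa0

/-- Integrability of the full twisted-convolution integrand on the product space. -/
lemma F_integrable (d : ℕ) (a b : SchwartzMap (RR2 d) ℂ) (c x y : RR d) :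
    Integrable (fun p : RR d × RR2 d =>
      a ((c, p.1) - p.2) * b p.2
        * Complex.exp (2 * Complex.I * ((sform d (c, p.1) p.2 : ℝ) : ℂ))
        * Complex.exp (-Complex.I * ((∑ j, (x j + y j) * p.1 j : ℝ) : ℂ)))
      ((volume : Measure (RR d)).prod (volume : Measure (RR2 d))) := by
  obtain ⟨Ca, hCa0, hkey⟩ := key_bound d a b c
  have hint : Integrable (fun p : RR d × RR2 d =>
      (((1 + ‖p.1‖) ^ (d + 1) : ℝ)⁻¹) * (Ca * ((1 + ‖p.2‖) ^ (d + 1) * ‖b p.2‖)))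
      ((volume : Measure (RR d)).prod (volume : Measure (RR2 d))) :=
    (integrable_inv_weight d).mul_prod ((schwartz_integrable_weight d b (d + 1)).const_mul Ca)
  refine hint.mono' ?_ (Filter.Eventually.of_forall fun p => ?_)
  · apply Continuous.aestronglyMeasurable
    have hca : Continuous fun p : RR d × RR2 d => (⇑a) ((c, p.1) - p.2) :=
      a.continuous.comp ((continuous_const.prodMk continuous_fst).sub continuous_snd)
    have hcb : Continuous fun p : RR d × RR2 d => (⇑b) p.2 := b.continuous.comp continuous_snd
    have hsf : Continuous fun p : RR d × RR2 d => sform d (c, p.1) p.2 := by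
      apply Continuous.sub
      · apply continuous_finset_sum
        intro j _
        exact ((continuous_apply j).comp (continuous_fst.comp continuous_snd)).mul
          ((continuous_apply j).comp continuous_fst)
      · apply continuous_finset_sum
        intro j _
        exact continuous_const.mul ((continuous_apply j).comp (continuous_snd.comp continuous_snd))
    have hexp1 : Continuous fun p : RR d × RR2 d =>
        Complex.exp (2 * Complex.I * ((sform d (c, p.1) p.2 : ℝ) : ℂ)) :=
      Complex.continuous_exp.comp (continuous_const.mul (Complex.continuous_ofReal.comp hsf))
    have hsum : Continuous fun p : RR d × RR2 d => (∑ j, (x j + y j) * p.1 j : ℝ) := by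
      apply continuous_finset_sum
      intro j _
      exact continuous_const.mul ((continuous_apply j).comp continuous_fst)
    have hexp2 : Continuous fun p : RR d × RR2 d =>
        Complex.exp (-Complex.I * ((∑ j, (x j + y j) * p.1 j : ℝ) : ℂ)) :=
      Complex.continuous_exp.comp (continuous_const.mul (Complex.continuous_ofReal.comp hsum))
    exact ((hca.mul hcb).mul hexp1).mul hexp2
  · have e1 : ‖Complex.exp (2 * Complex.I * ((sform d (c, p.1) p.2 : ℝ) : ℂ))‖ = 1 := by
      rw [show 2 * Complex.I * ((sform d (c, p.1) p.2 : ℝ) : ℂ)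
        = ((2 * sform d (c, p.1) p.2 : ℝ) : ℂ) * Complex.I by push_cast; ring]
      exact Complex.norm_exp_ofReal_mul_I _
    have e2 : ‖Complex.exp (-Complex.I * ((∑ j, (x j + y j) * p.1 j : ℝ) : ℂ))‖ = 1 := by
      rw [show -Complex.I * ((∑ j, (x j + y j) * p.1 j : ℝ) : ℂ)
        = ((-(∑ j, (x j + y j) * p.1 j) : ℝ) : ℂ) * Complex.I by push_cast; ring]
      exact Complex.norm_exp_ofReal_mul_I _
    calc ‖a ((c, p.1) - p.2) * b p.2
          * Complex.exp (2 * Complex.I * ((sform d (c, p.1) p.2 : ℝ) : ℂ))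
          * Complex.exp (-Complex.I * ((∑ j, (x j + y j) * p.1 j : ℝ) : ℂ))‖
        = ‖a ((c, p.1) - p.2)‖ * ‖b p.2‖ := by
          rw [norm_mul, norm_mul, norm_mul, e1, e2]; ring
      _ ≤ (((1 + ‖p.1‖) ^ (d + 1) : ℝ)⁻¹) * (Ca * ((1 + ‖p.2‖) ^ (d + 1) * ‖b p.2‖)) :=
          hkey p.1 p.2

/-- `A` turns the twisted convolution into operator composition:
`A(a *_σ b)(x,y) = ∫ (Aa)(x,t) (Ab)(t,y) dt`. -/
theorem opA_twConv
    (d : ℕ) (hd : 0 < d) (a b : SchwartzMap (RR2 d) ℂ) (x y : RR d) :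
    opA d (twConv d ⇑a ⇑b) (x, y)
      = ∫ t : RR d, opA d ⇑a (x, t) * opA d ⇑b (t, y) := by
  haveI : (volume : Measure (RR2 d)).IsAddHaarMeasure :=
    Measure.prod.instIsAddHaarMeasure volume volume
  set K1 : ℂ := (((2 * Real.pi) ^ (-(d : ℝ)/2) : ℝ) : ℂ) with hK1
  set K2 : ℂ := ((((2 / Real.pi) ^ ((d : ℝ)/2) : ℝ)) : ℂ) with hK2
  set c : RR d := (2:ℝ)⁻¹ • (y - x) with hc
  set F : RR d → RR2 d → ℂ := fun ξ Y =>
    a ((c, ξ) - Y) * b Y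
      * Complex.exp (2 * Complex.I * ((sform d (c, ξ) Y : ℝ) : ℂ))
      * Complex.exp (-Complex.I * ((∑ j, (x j + y j) * ξ j : ℝ) : ℂ)) with hF_def
  set Af : RR d → RR d → ℂ := fun t ξ =>
    a ((2:ℝ)⁻¹ • (t - x), ξ)
      * Complex.exp (-Complex.I * ((∑ j, (x j + t j) * ξ j : ℝ) : ℂ)) with hAf
  set Bf : RR d → RR d → ℂ := fun t η =>
    b ((2:ℝ)⁻¹ • (y - t), η)
      * Complex.exp (-Complex.I * ((∑ j, (t j + y j) * η j : ℝ) : ℂ)) with hBf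
  set W : RR d → ℂ := fun u => ∫ η, ∫ ξ, F (ξ + η) (u, η) with hW_def
  have hF : Integrable (fun p : RR d × RR2 d => F p.1 p.2)
      ((volume : Measure (RR d)).prod (volume : Measure (RR2 d))) := by
    simp only [hF_def]
    exact F_integrable d a b c x y
  -- Step 1 : unfold the left-hand side
  have h1 : opA d (twConv d ⇑a ⇑b) (x, y)
      = K1 * ∫ ξ : RR d, twConv d ⇑a ⇑b (c, ξ)
          * Complex.exp (-Complex.I * ((∑ j, (x j + y j) * ξ j : ℝ) : ℂ)) := rfl
  -- Step 2 : unfold the twisted convolution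
  have h2 : ∀ ξ : RR d, twConv d ⇑a ⇑b (c, ξ)
      * Complex.exp (-Complex.I * ((∑ j, (x j + y j) * ξ j : ℝ) : ℂ))
      = K2 * ∫ Y : RR2 d, F ξ Y := by
    intro ξ
    rw [twConv, mul_assoc, ← integral_mul_const]
  -- Fubini swap
  have hswap : ∫ ξ : RR d, ∫ Y : RR2 d, F ξ Y = ∫ Y : RR2 d, ∫ ξ : RR d, F ξ Y :=
    integral_integral_swap hF
  -- inner integral over `RR2 d` as an iterated integral
  have hh : Integrable (fun Y : RR2 d => ∫ ξ : RR d, F ξ Y) (volume : Measure (RR2 d)) :=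
    hF.integral_prod_right
  have h5 : ∫ Y : RR2 d, ∫ ξ : RR d, F ξ Y = ∫ u : RR d, ∫ η : RR d, ∫ ξ : RR d, F ξ (u, η) := by
    rw [Measure.volume_eq_prod]
    exact integral_prod _ hh
  -- translation in `ξ`
  have hshift : ∀ u η : RR d, ∫ ξ : RR d, F ξ (u, η) = ∫ ξ : RR d, F (ξ + η) (u, η) :=
    fun u η => (integral_add_right_eq_self (fun ξ => F ξ (u, η)) η).symm
  -- scaling substitution `u = (y - t)/2`
  have habs : |(((2:ℝ)⁻¹) ^ (Module.finrank ℝ (RR d)))⁻¹| = (2:ℝ) ^ d := by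
    rw [Module.finrank_fin_fun, _root_.abs_of_nonneg (by positivity), inv_pow, inv_inv]
  have hscale : ∫ u : RR d, W u = ((2:ℝ) ^ d)⁻¹ • ∫ t : RR d, W ((2:ℝ)⁻¹ • (y - t)) := by
    have e1 : ∫ t : RR d, W ((2:ℝ)⁻¹ • (y - t)) = ∫ s : RR d, W ((2:ℝ)⁻¹ • s) :=
      integral_sub_left_eq_self (fun s => W ((2:ℝ)⁻¹ • s)) volume y
    have e2 : ∫ s : RR d, W ((2:ℝ)⁻¹ • s)
        = |(((2:ℝ)⁻¹) ^ (Module.finrank ℝ (RR d)))⁻¹| • ∫ u : RR d, W u :=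
      Measure.integral_comp_smul volume W (2:ℝ)⁻¹
    rw [e1, e2, habs, smul_smul, inv_mul_cancel₀ (by positivity), one_smul]
  -- the pointwise sum identity
  have hsum : ∀ t ξ η : RR d,
      (2:ℝ) * sform d (c, ξ + η) ((2:ℝ)⁻¹ • (y - t), η) - (∑ j, (x j + y j) * (ξ + η) j)
      = -((∑ j, (x j + t j) * ξ j) + (∑ j, (t j + y j) * η j)) := by
    intro t ξ η
    simp only [sform, hc, Pi.add_apply, Pi.smul_apply, Pi.sub_apply, smul_eq_mul]
    rw [mul_sub, Finset.mul_sum, Finset.mul_sum, ← Finset.sum_sub_distrib,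
      ← Finset.sum_sub_distrib, ← Finset.sum_add_distrib, ← Finset.sum_neg_distrib]
    exact Finset.sum_congr rfl fun j _ => by ring
  -- the pointwise phase identity
  have hphase : ∀ t ξ η : RR d,
      Complex.exp (2 * Complex.I * ((sform d (c, ξ + η) ((2:ℝ)⁻¹ • (y - t), η) : ℝ) : ℂ))
        * Complex.exp (-Complex.I * ((∑ j, (x j + y j) * (ξ + η) j : ℝ) : ℂ))
      = Complex.exp (-Complex.I * ((∑ j, (x j + t j) * ξ j : ℝ) : ℂ))
        * Complex.exp (-Complex.I * ((∑ j, (t j + y j) * η j : ℝ) : ℂ)) := by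
    intro t ξ η
    rw [← Complex.exp_add, ← Complex.exp_add]
    congr 1
    have h := hsum t ξ η
    have h' : (((2:ℝ) * sform d (c, ξ + η) ((2:ℝ)⁻¹ • (y - t), η)
        - (∑ j, (x j + y j) * (ξ + η) j) : ℝ) : ℂ)
        = ((-((∑ j, (x j + t j) * ξ j) + (∑ j, (t j + y j) * η j) : ℝ)) : ℂ) := by
      exact_mod_cast congrArg Complex.ofReal h
    push_cast at h' ⊢
    linear_combination Complex.I * h'
  -- the argument identity
  have harg : ∀ t ξ η : RR d,
      ((c, ξ + η) : RR2 d) - (((2:ℝ)⁻¹ • (y - t) : RR d), η) = (((2:ℝ)⁻¹ • (t - x) : RR d), ξ) := by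
    intro t ξ η
    have hone : c - (2:ℝ)⁻¹ • (y - t) = (2:ℝ)⁻¹ • (t - x) := by
      funext j
      simp only [hc, Pi.sub_apply, Pi.smul_apply, smul_eq_mul]
      ring
    rw [Prod.mk_sub_mk, hone, add_sub_cancel_right]
  -- the pointwise factorization of `W`
  have hW : ∀ t : RR d, W ((2:ℝ)⁻¹ • (y - t)) = (∫ ξ : RR d, Af t ξ) * (∫ η : RR d, Bf t η) := by
    intro t
    have hpt : ∀ η ξ : RR d, F (ξ + η) ((2:ℝ)⁻¹ • (y - t), η) = Af t ξ * Bf t η := by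
      intro η ξ
      simp only [hF_def, hAf, hBf]
      rw [harg t ξ η, mul_assoc, hphase t ξ η]
      ring
    simp only [hW_def, hpt]
    simp only [integral_mul_const]
    rw [integral_const_mul]
  -- unfold the right-hand side
  have hRHS : ∀ t : RR d, opA d ⇑a (x, t) * opA d ⇑b (t, y)
      = (K1 * K1) * ((∫ ξ : RR d, Af t ξ) * (∫ η : RR d, Bf t η)) := by
    intro t
    show (K1 * ∫ ξ : RR d, Af t ξ) * (K1 * ∫ η : RR d, Bf t η) = _
    ring
  -- the constants
  have hconstR : ((2 / Real.pi) ^ ((d : ℝ)/2)) * (((2:ℝ) ^ d)⁻¹)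
      = (2 * Real.pi) ^ (-(d : ℝ)/2) := by
    have hπ := Real.pi_pos
    have h2d : ((2:ℝ) ^ d : ℝ) = (2:ℝ) ^ ((d : ℝ)) := (Real.rpow_natCast 2 d).symm
    rw [Real.div_rpow (by norm_num) hπ.le,
      show (-(d:ℝ)/2) = -((d:ℝ)/2) by ring,
      Real.rpow_neg (by positivity : (0:ℝ) ≤ 2 * Real.pi),
      Real.mul_rpow (by norm_num) hπ.le, h2d,
      show ((d:ℝ)) = (d:ℝ)/2 + (d:ℝ)/2 by ring,
      Real.rpow_add (by norm_num)]
    have hne1 : (2:ℝ) ^ ((d:ℝ)/2) ≠ 0 := by positivity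
    have hne2 : Real.pi ^ ((d:ℝ)/2) ≠ 0 := by positivity
    field_simp
    ring
  have hconst : K2 * ((((2:ℝ) ^ d)⁻¹ : ℝ) : ℂ) = K1 := by
    rw [hK1, hK2]
    exact_mod_cast congrArg Complex.ofReal hconstR
  -- assemble everything
  calc opA d (twConv d ⇑a ⇑b) (x, y)
      = K1 * ∫ ξ : RR d, twConv d ⇑a ⇑b (c, ξ)
          * Complex.exp (-Complex.I * ((∑ j, (x j + y j) * ξ j : ℝ) : ℂ)) := h1
    _ = K1 * (K2 * ∫ ξ : RR d, ∫ Y : RR2 d, F ξ Y) := by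
        simp only [h2]
        rw [integral_const_mul]
    _ = K1 * (K2 * ∫ u : RR d, W u) := by
        rw [hswap, h5]
        simp only [hshift, hW_def]
    _ = K1 * (K2 * (((2:ℝ) ^ d)⁻¹ • ∫ t : RR d, W ((2:ℝ)⁻¹ • (y - t)))) := by rw [hscale]
    _ = K1 * (K2 * ((((2:ℝ) ^ d)⁻¹ : ℝ) : ℂ)
          * ∫ t : RR d, (∫ ξ : RR d, Af t ξ) * (∫ η : RR d, Bf t η)) := by
        simp only [hW]
        rw [Complex.real_smul]
        ring
    _ = (K1 * K1) * ∫ t : RR d, (∫ ξ : RR d, Af t ξ) * (∫ η : RR d, Bf t η) := by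
        rw [hconst]
        ring
    _ = ∫ t : RR d, opA d ⇑a (x, t) * opA d ⇑b (t, y) := by
        simp only [hRHS]
        rw [integral_const_mul]


end
end
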